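/- arXiv:2508.06907 — 2 statements merged into one kernel-verified Lean document; each statement's English description precedes it below -/
import Mathlib

section
/- Let P be a square-free permutation of length n ≥ 6. For every i with 3 ≤ i ≤ n-3, any extension of P in position i contains a square of length 4. -/
/-- Two sequences of distinct integers are order-isomorphic:
same length and corresponding pairs compare the same way. -/
def OrdIso (p q : List ℤ) : Prop :=
  p.length = q.length ∧
  ∀ i j : ℕ, i < p.length → j < p.length →
    (p.getD i 0 < p.getD j 0 ↔ q.getD i 0 < q.getD j 0)

/-- A square is a sequence X₁X₂ with X₁ order-isomorphic to X₂ and |X₁| ≥ 2. -/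
def IsSquareL (x : List ℤ) : Prop :=
  ∃ a b : List ℤ, x = a ++ b ∧ 2 ≤ a.length ∧ OrdIso a b

/-- A sequence contains a square if some contiguous factor is a square. -/
def ContainsSquare (p : List ℤ) : Prop :=
  ∃ f : List ℤ, f <:+: p ∧ IsSquareL f

/-- Square-free: no contiguous factor is a square. -/
def SquareFreeL (p : List ℤ) : Prop := ¬ ContainsSquare p

/-- `Q` is an extension of `P` in position `i`:
`Q` has length `|P|+1` and deleting its (i+1)-th symbol gives a
sequence order-isomorphic to `P`. -/
def ExtL (Q P : List ℤ) (i : ℕ) : Prop :=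
  Q.Nodup ∧ Q.length = P.length + 1 ∧ i ≤ P.length ∧ OrdIso (Q.eraseIdx i) P

/-!
In a sequence of distinct integers a factor `a b c d` is a square exactly when `a < b ↔ c < d`,
so a sequence without squares of length 4 has, at every `j`, the comparison at `j + 2` opposite
to the one at `j`. If `Q` had no such square, this would hold both for the window
`q (i-3), …, q (i+3)` of `Q` and, through the order isomorphism with `P`, for the same window
with `q i` deleted; a case analysis on the comparisons shows that the two are incompatible.
-/

/-- For distinct values this says that the factor `x j, …, x (j+3)` is a square. -/
def SquareAt (x : ℕ → ℤ) (j : ℕ) : Prop :=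
  (x j < x (j + 1) ↔ x (j + 2) < x (j + 3))

def ContainsSquare4 (l : List ℤ) : Prop :=
  ∃ f : List ℤ, f <:+: l ∧ f.length = 4 ∧ IsSquareL f

theorem ContainsSquare4.containsSquare {l : List ℤ} : ContainsSquare4 l → ContainsSquare l :=
  fun ⟨f, hf, _, hsq⟩ => ⟨f, hf, hsq⟩

theorem isSquareL_of_lt_iff_lt {a b c d : ℤ} (hab : a ≠ b) (hcd : c ≠ d) (h : a < b ↔ c < d) :
    IsSquareL [a, b, c, d] := by
  refine ⟨[a, b], [c, d], rfl, le_rfl, rfl, fun i j hi hj => ?_⟩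
  simp only [List.length_cons, List.length_nil] at hi hj
  interval_cases i <;> interval_cases j <;> simp <;> omega

namespace List

theorem getD_eraseIdx {α : Type*} (l : List α) (i j : ℕ) (d : α) :
    (l.eraseIdx i).getD j d = if j < i then l.getD j d else l.getD (j + 1) d := by
  simp only [getD_eq_getElem?_getD, getElem?_eraseIdx]
  split <;> rfl

theorem window4_infix {α : Type*} (l : List α) {j : ℕ} (hj : j + 4 ≤ l.length) (d : α) :
    [l.getD j d, l.getD (j + 1) d, l.getD (j + 2) d, l.getD (j + 3) d] <:+: l := by
  refine infix_iff_getElem?.mpr ⟨j, by simpa [add_comm] using hj, fun i hi => ?_⟩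
  simp only [length_cons, length_nil] at hi
  have key : ∀ m < l.length, l[m]? = some (l[m]?.getD d) := fun m hm => by
    simp [getElem?_eq_getElem hm]
  interval_cases i <;> simp [getD_eq_getElem?_getD, add_comm] <;> exact key _ (by omega)

theorem Nodup.getD_ne {α : Type*} {l : List α} (hl : l.Nodup) {a b : ℕ} (ha : a < l.length)
    (hb : b < l.length) (hab : a ≠ b) (d : α) : l.getD a d ≠ l.getD b d := by
  rw [getD_eq_getElem _ _ ha, getD_eq_getElem _ _ hb]
  exact fun h => hab (hl.getElem_inj_iff.mp h)

theorem Nodup.containsSquare4_of_squareAt {l : List ℤ} (hl : l.Nodup) {j : ℕ}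
    (hj : j + 4 ≤ l.length) (h : SquareAt (l.getD · 0) j) : ContainsSquare4 l :=
  ⟨_, l.window4_infix hj 0, rfl,
    isSquareL_of_lt_iff_lt (hl.getD_ne (by omega) (by omega) (by omega) 0)
      (hl.getD_ne (by omega) (by omega) (by omega) 0) h⟩

end List

theorem OrdIso.squareAt_iff {p q : List ℤ} (h : OrdIso p q) {j : ℕ} (hj : j + 4 ≤ p.length) :
    SquareAt (p.getD · 0) j ↔ SquareAt (q.getD · 0) j := by
  unfold SquareAt
  rw [h.2 j (j + 1) (by omega) (by omega), h.2 (j + 2) (j + 3) (by omega) (by omega)]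

theorem not_squareAt_window_and_erase (x : ℕ → ℤ) (hx : ∀ j < 4, ¬ SquareAt x j)
    (hy : ∀ j < 3, ¬ SquareAt (fun t => if t < 3 then x t else x (t + 1)) j) : False := by
  have := hx 0; have := hx 1; have := hx 2; have := hx 3
  have := hy 0; have := hy 1; have := hy 2
  clear hx hy
  simp_all [SquareAt]
  tauto

theorem stmt12_general (n : ℕ) (P : List ℤ) (hnd : P.Nodup)
    (hlen : P.length = n) (hsf : SquareFreeL P) :
    ∀ i : ℕ, 3 ≤ i → i ≤ n - 3 → ∀ Q : List ℤ, ExtL Q P i →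
      ∃ f : List ℤ, f <:+: Q ∧ f.length = 4 ∧ IsSquareL f := by
  rintro i hi hin Q ⟨hQnd, hQlen, -, hiso⟩
  by_contra hQ
  set x : ℕ → ℤ := fun t => Q.getD (i - 3 + t) 0
  have herase : ∀ t, (Q.eraseIdx i).getD (i - 3 + t) 0 = if t < 3 then x t else x (t + 1) := by
    intro t
    rw [List.getD_eraseIdx]
    split_ifs <;> first | rfl | omega
  refine not_squareAt_window_and_erase x (fun j hj hsq => hQ ?_) (fun j hj hsq => hsf ?_)
  · exact hQnd.containsSquare4_of_squareAt (j := i - 3 + j) (by omega)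
      (by simpa only [SquareAt, add_assoc] using hsq)
  · refine (hnd.containsSquare4_of_squareAt (j := i - 3 + j) (by omega) ?_).containsSquare
    rw [← hiso.squareAt_iff (by rw [hiso.1]; omega)]
    simpa only [SquareAt, add_assoc, herase] using hsq

theorem stmt12 (n : ℕ) (hn : 6 ≤ n) (P : List ℤ) (hnd : P.Nodup)
    (hlen : P.length = n) (hsf : SquareFreeL P) :
    ∀ i : ℕ, 3 ≤ i → i ≤ n - 3 → ∀ Q : List ℤ, ExtL Q P i →
      ∃ f : List ℤ, f <:+: Q ∧ f.length = 4 ∧ IsSquareL f :=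
  stmt12_general n P hnd hlen hsf
end

section
/- Let m ≥ 2 and let E_m be the permutation of length 8m+5 constructed in the main theorem (E_m = 1 E'_m (8m+5), where E'_m is obtained by Construction 2 from S_m = (6m+4)(6m+5)…(8m+4), H_m, and T_m = 2,3,…,(2m+2)). Then for every i with 3 ≤ i ≤ 8m+2, any extension of E_m in position i contains a square of length 4; yet E_m is not S-crucial. -/
/-- The interleaving pattern a₁b₁c₁b₂a₂b₃c₂… of length 4m-1 :
with 1-based index i, pᵢ = a_{(i+3)/4} if i ≡ 1 mod 4, pᵢ = c_{(i+1)/4}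
if i ≡ 3 mod 4, pᵢ = b_{i/2} if i is even. -/
def interleave (A B C : List ℤ) (m : ℕ) : List ℤ :=
  (List.range (4*m - 1)).map (fun k =>
    if (k+1) % 4 = 1 then A.getD ((k+4)/4 - 1) 0
    else if (k+1) % 4 = 3 then C.getD ((k+2)/4 - 1) 0
    else B.getD ((k+1)/2 - 1) 0)

/-- H_m = (6m+3) H'_m (2m+3) where H'_m is Construction 1 applied to
X_m (decreasing on {2m+4,…,3m+3}), Y_m, Z_m (decreasing on {5m+3,…,6m+2}). -/
def Hm (m : ℕ) (Y : List ℤ) : List ℤ :=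
  ((6*m + 3 : ℤ) ::
    interleave ((List.range m).map (fun j => (3*m + 3 - j : ℤ))) Y
      ((List.range m).map (fun j => (6*m + 2 - j : ℤ))) m) ++ [(2*m + 3 : ℤ)]

/-- E_m = 1 E'_m (8m+5) where E'_m is Construction 2 applied to
S_m = (6m+4)…(8m+4), H_m and T_m = 2,3,…,(2m+2). -/
def Em (m : ℕ) (Y : List ℤ) : List ℤ :=
  ((1 : ℤ) ::
    interleave ((List.range (2*m + 1)).map (fun j => (6*m + 4 + j : ℤ))) (Hm m Y)
      ((List.range (2*m + 1)).map (fun j => (2 + j : ℤ))) (2*m + 1)) ++ [(8*m + 5 : ℤ)]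

section GetD

variable {α : Type*} {l : List α} {d : α}

lemma getD_mem {k : ℕ} (hk : k < l.length) : l.getD k d ∈ l := by
  rw [List.getD_eq_getElem _ _ hk]
  exact List.getElem_mem hk

lemma getD_injective_of_nodup (hl : l.Nodup) {i j : ℕ} (hi : i < l.length) (hj : j < l.length)
    (h : l.getD i d = l.getD j d) : i = j := by
  rwa [List.getD_eq_getElem _ _ hi, List.getD_eq_getElem _ _ hj, hl.getElem_inj_iff] at h

lemma nodup_of_getD_injective
    (h : ∀ p q, p < l.length → q < l.length → l.getD p d = l.getD q d → p = q) :
    l.Nodup := by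
  refine List.nodup_iff_injective_get.mpr fun ⟨p, hp⟩ ⟨q, hq⟩ hpq => Fin.ext ?_
  have := h p q hp hq
  rw [List.getD_eq_getElem _ _ hp, List.getD_eq_getElem _ _ hq] at this
  exact this hpq

lemma getD_ne_getD_succ (hl : l.Nodup) {k : ℕ} (hk : k + 1 < l.length) :
    l.getD k d ≠ l.getD (k + 1) d := by
  intro h
  have := getD_injective_of_nodup hl (by omega) hk h
  omega

lemma getD_eraseIdx (i k : ℕ) :
    (l.eraseIdx i).getD k d = if k < i then l.getD k d else l.getD (k + 1) d := by
  simp only [List.getD_eq_getElem?_getD, List.getElem?_eraseIdx]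
  split <;> rfl

lemma getD_insertIdx_of_lt {i k : ℕ} (x : α) (hk : k < i) :
    (l.insertIdx i x).getD k d = l.getD k d := by
  simp only [List.getD_eq_getElem?_getD, List.getElem?_insertIdx, if_pos hk]

lemma getD_insertIdx_self {i : ℕ} (x : α) (hi : i ≤ l.length) :
    (l.insertIdx i x).getD i d = x := by
  simp [List.getD_eq_getElem?_getD, List.getElem?_insertIdx, hi]

lemma getD_insertIdx_of_gt {i k : ℕ} (x : α) (hk : i < k) :
    (l.insertIdx i x).getD k d = l.getD (k - 1) d := by
  simp only [List.getD_eq_getElem?_getD, List.getElem?_insertIdx, if_neg (by omega : ¬k < i),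
    if_neg (by omega : k ≠ i)]

lemma getD_take_drop {s n o : ℕ} (ho : o < n) (h : s + n ≤ l.length) :
    ((l.drop s).take n).getD o d = l.getD (s + o) d := by
  rw [List.getD_eq_getElem _ _ (by simp; omega), List.getD_eq_getElem _ _ (by omega),
    List.getElem_take, List.getElem_drop]

end GetD

lemma getD_map_of_map_zero {f : ℤ → ℤ} (hf : f 0 = 0) (P : List ℤ) (k : ℕ) :
    (P.map f).getD k 0 = f (P.getD k 0) := by
  rw [← List.getD_map P 0 f, hf]

lemma getD_map_neg (P : List ℤ) (k : ℕ) : (P.map Neg.neg).getD k 0 = -P.getD k 0 :=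
  getD_map_of_map_zero neg_zero P k

def IsSquareAt (P : List ℤ) (s L : ℕ) : Prop :=
  2 ≤ L ∧ s + L + L ≤ P.length ∧ ∀ o < L, ∀ o' < L,
    (P.getD (s + o) 0 < P.getD (s + o') 0 ↔ P.getD (s + L + o) 0 < P.getD (s + L + o') 0)

lemma IsSquareAt.exists_isSquareL {P : List ℤ} {s L : ℕ} (h : IsSquareAt P s L) :
    ∃ f, f <:+: P ∧ f.length = L + L ∧ IsSquareL f := by
  obtain ⟨hL, hlen, hiso⟩ := h
  refine ⟨(P.drop s).take (L + L),
    ((P.drop s).take_prefix _).isInfix.trans (P.drop_suffix s).isInfix, by simp; omega,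
    (P.drop s).take L, (P.drop (s + L)).take L, by rw [List.take_add, List.drop_drop],
    by simp; omega, by simp; omega, ?_⟩
  intro o o' ho ho'
  simp only [List.length_take, List.length_drop, lt_min_iff] at ho ho'
  rw [getD_take_drop ho.1 (by omega), getD_take_drop ho'.1 (by omega),
    getD_take_drop ho.1 (by omega), getD_take_drop ho'.1 (by omega)]
  exact hiso o ho.1 o' ho'.1

lemma containsSquare_iff {P : List ℤ} : ContainsSquare P ↔ ∃ s L, IsSquareAt P s L := by
  refine ⟨?_, fun ⟨s, L, h⟩ => h.exists_isSquareL.imp fun f hf => ⟨hf.1, hf.2.2⟩⟩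
  rintro ⟨f, ⟨u, v, rfl⟩, a, b, rfl, hL, hlen, hiso⟩
  have hP : ∀ w < a.length + a.length,
      (u ++ (a ++ b) ++ v).getD (u.length + w) 0 = (a ++ b).getD w 0 := by
    intro w hw
    rw [List.getD_append _ _ _ _ (by simp; omega), List.getD_append_right _ _ _ _ (by omega),
      Nat.add_sub_cancel_left]
  refine ⟨u.length, a.length, hL, by simp; omega, fun o ho o' ho' => ?_⟩
  rw [hP o (by omega), hP o' (by omega), add_assoc, add_assoc, hP _ (by omega),
    hP _ (by omega), List.getD_append _ _ _ _ ho, List.getD_append _ _ _ _ ho',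
    List.getD_append_right _ _ _ _ (by omega), List.getD_append_right _ _ _ _ (by omega),
    Nat.add_sub_cancel_left, Nat.add_sub_cancel_left]
  exact hiso o o' ho ho'

lemma IsSquareAt.of_getD_eq {P P' : List ℤ} {s t L : ℕ} (h : IsSquareAt P s L)
    (hlen : t + L + L ≤ P'.length) (heq : ∀ o < L + L, P'.getD (t + o) 0 = P.getD (s + o) 0) :
    IsSquareAt P' t L := by
  refine ⟨h.1, hlen, fun o ho o' ho' => ?_⟩
  rw [heq o (by omega), heq o' (by omega), add_assoc, add_assoc, heq _ (by omega),
    heq _ (by omega), ← add_assoc, ← add_assoc]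
  exact h.2.2 o ho o' ho'

lemma isSquareAt_map_neg_iff {P : List ℤ} {s L : ℕ} :
    IsSquareAt (P.map Neg.neg) s L ↔ IsSquareAt P s L := by
  simp only [IsSquareAt, getD_map_neg, neg_lt_neg_iff, List.length_map]
  exact and_congr_right fun _ => and_congr_right fun _ =>
    ⟨fun h o ho o' ho' => h o' ho' o ho, fun h o ho o' ho' => h o' ho' o ho⟩

lemma containsSquare_map_neg_iff {P : List ℤ} :
    ContainsSquare (P.map Neg.neg) ↔ ContainsSquare P := by
  simp only [containsSquare_iff, isSquareAt_map_neg_iff]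

/-- Comparing the first two steps of both halves pins down `L` modulo 4. -/
lemma IsSquareAt.four_dvd {P : List ℤ} {s L : ℕ} (h : IsSquareAt P s L) (c : ℕ)
    (hP : ∀ k, k + 1 < P.length →
      (P.getD k 0 < P.getD (k + 1) 0 ↔ (k + c) % 4 = 1 ∨ (k + c) % 4 = 2)) :
    4 ∣ L := by
  obtain ⟨hL, hlen, hiso⟩ := h
  have step : ∀ t, t + 1 < L →
      ((s + t + c) % 4 = 1 ∨ (s + t + c) % 4 = 2 ↔
        (s + L + t + c) % 4 = 1 ∨ (s + L + t + c) % 4 = 2) := by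
    intro t ht
    rw [← hP _ (by omega), ← hP _ (by omega), add_assoc s t 1, add_assoc (s + L) t 1]
    exact hiso t (by omega) (t + 1) ht
  have h0 := step 0 (by omega)
  rcases Nat.lt_or_ge L 3 with hL3 | hL3
  · omega
  · have h1 := step 1 (by omega)
    omega

lemma isSquareAt_two {P : List ℤ} {k : ℕ} (hk : k + 4 ≤ P.length)
    (h01 : P.getD k 0 ≠ P.getD (k + 1) 0) (h23 : P.getD (k + 2) 0 ≠ P.getD (k + 3) 0)
    (h : P.getD (k + 1) 0 < P.getD k 0 ↔ P.getD (k + 3) 0 < P.getD (k + 2) 0) :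
    IsSquareAt P k 2 := by
  refine ⟨le_rfl, hk, fun o ho o' ho' => ?_⟩
  interval_cases o <;> interval_cases o' <;> simp only [add_zero, add_assoc, Nat.reduceAdd] <;>
    omega

/-- After the new entry the descent pattern of `Q` is that of `P` shifted by one; in the five
steps around it this forces two equal comparisons at distance 2. -/
lemma exists_square_four_of_extL {P Q : List ℤ} {i : ℕ}
    (hP : ∀ k, k + 1 < P.length →
      (P.getD (k + 1) 0 < P.getD k 0 ↔ k % 4 = 1 ∨ k % 4 = 2))
    (hext : ExtL Q P i) (hi : 3 ≤ i) (hi' : i + 3 ≤ P.length) :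
    ∃ f, f <:+: Q ∧ f.length = 4 ∧ IsSquareL f := by
  obtain ⟨hnd, hlen, -, hlen', hiso⟩ := hext
  have cmp : ∀ a b, a < P.length → b < P.length →
      ((Q.eraseIdx i).getD b 0 < (Q.eraseIdx i).getD a 0 ↔ P.getD b 0 < P.getD a 0) :=
    fun a b ha hb => hiso b a (by omega) (by omega)
  have before : ∀ k, k + 1 < i →
      (Q.getD (k + 1) 0 < Q.getD k 0 ↔ k % 4 = 1 ∨ k % 4 = 2) := by
    intro k hk
    have := cmp k (k + 1) (by omega) (by omega)
    rwa [getD_eraseIdx, getD_eraseIdx, if_pos (by omega), if_pos (by omega),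
      hP k (by omega)] at this
  have after : ∀ k, i ≤ k → k + 1 < P.length →
      (Q.getD (k + 2) 0 < Q.getD (k + 1) 0 ↔ k % 4 = 1 ∨ k % 4 = 2) := by
    intro k hik hk
    have := cmp k (k + 1) (by omega) hk
    rwa [getD_eraseIdx, getD_eraseIdx, if_neg (by omega), if_neg (by omega),
      hP k hk] at this
  obtain ⟨k, hk, hsame⟩ : ∃ k, k ≤ i ∧
      (Q.getD (k + 1) 0 < Q.getD k 0 ↔ Q.getD (k + 3) 0 < Q.getD (k + 2) 0) := by
    by_contra! hcon
    obtain ⟨j, rfl⟩ : ∃ j, i = j + 3 := ⟨i - 3, by omega⟩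
    have := before j (by omega)
    have := before (j + 1) (by omega)
    have := after (j + 3) le_rfl (by omega)
    have := after (j + 4) (by omega) (by omega)
    have := hcon j (by omega)
    have := hcon (j + 1) (by omega)
    have := hcon (j + 2) (by omega)
    have := hcon (j + 3) (by omega)
    simp only [add_assoc, Nat.reduceAdd] at *
    omega
  exact (isSquareAt_two (by omega) (getD_ne_getD_succ hnd (by omega))
    (getD_ne_getD_succ hnd (by omega)) hsame).exists_isSquareL

section Interleave

variable {A B C : List ℤ} {n k : ℕ}

lemma length_interleave : (interleave A B C n).length = 4 * n - 1 := by
  simp [interleave]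

lemma interleave_getD (hk : k < 4 * n - 1) :
    (interleave A B C n).getD k 0 =
      if k % 4 = 0 then A.getD (k / 4) 0
      else if k % 4 = 2 then C.getD (k / 4) 0
      else B.getD (k / 2) 0 := by
  rw [interleave, List.getD_eq_getElem?_getD, List.getElem?_map, List.getElem?_range hk]
  simp only [Option.map_some, Option.getD_some]
  split_ifs <;> first | omega | (congr 1; omega)

lemma interleave_map (f : ℤ → ℤ) (hf : f 0 = 0) :
    (interleave A B C n).map f = interleave (A.map f) (B.map f) (C.map f) n := by
  simp only [interleave, List.map_map]
  congr 1
  funext k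
  simp only [Function.comp_apply, getD_map_of_map_zero hf]
  split_ifs <;> rfl

lemma mem_interleave (hA : n ≤ A.length) (hB : 2 * n - 1 ≤ B.length) (hC : n ≤ C.length)
    {x : ℤ} (hx : x ∈ interleave A B C n) : x ∈ A ++ B ++ C := by
  obtain ⟨k, hk, rfl⟩ := List.getElem_of_mem hx
  rw [← List.getD_eq_getElem _ 0, interleave_getD (by simpa [length_interleave] using hk)]
  rw [length_interleave] at hk
  simp only [List.mem_append]
  split_ifs
  · exact Or.inl (Or.inl (getD_mem (by omega)))
  · exact Or.inr (getD_mem (by omega))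
  · exact Or.inl (Or.inr (getD_mem (by omega)))

lemma interleave_nodup (hA : A.Nodup) (hB : B.Nodup) (hC : C.Nodup)
    (hAn : n ≤ A.length) (hBn : 2 * n - 1 ≤ B.length) (hCn : n ≤ C.length)
    (hAB : A.Disjoint B) (hBC : B.Disjoint C) (hAC : A.Disjoint C) :
    (interleave A B C n).Nodup := by
  refine nodup_of_getD_injective (d := 0) fun p q hp hq hpq => ?_
  rw [length_interleave] at hp hq
  rw [interleave_getD hp, interleave_getD hq] at hpq
  split_ifs at hpq <;> first
    | (have := getD_injective_of_nodup hA (by omega) (by omega) hpq; omega)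
    | (have := getD_injective_of_nodup hB (by omega) (by omega) hpq; omega)
    | (have := getD_injective_of_nodup hC (by omega) (by omega) hpq; omega)
    | exact (hAB (getD_mem (by omega)) (hpq ▸ getD_mem (by omega))).elim
    | exact (hAB (hpq ▸ getD_mem (by omega)) (getD_mem (by omega))).elim
    | exact (hBC (getD_mem (by omega)) (hpq ▸ getD_mem (by omega))).elim
    | exact (hBC (hpq ▸ getD_mem (by omega)) (getD_mem (by omega))).elim
    | exact (hAC (getD_mem (by omega)) (hpq ▸ getD_mem (by omega))).elim
    | exact (hAC (hpq ▸ getD_mem (by omega)) (getD_mem (by omega))).elim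

end Interleave

/-- `top H' bot`, where `H'` is Construction 1 applied to `A`, `B`, `C`. -/
def framed (top : ℤ) (A B C : List ℤ) (bot : ℤ) (n : ℕ) : List ℤ :=
  (top :: interleave A B C n) ++ [bot]

section Framed

variable {top bot : ℤ} {A B C : List ℤ} {n p : ℕ}

lemma length_framed (hn : 0 < n) : (framed top A B C bot n).length = 4 * n + 1 := by
  simp only [framed, List.length_append, List.length_cons, length_interleave, List.length_nil]
  omega

lemma framed_getD_zero : (framed top A B C bot n).getD 0 0 = top := rfl

lemma framed_getD_four_mul (hn : 0 < n) : (framed top A B C bot n).getD (4 * n) 0 = bot := by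
  rw [framed, List.getD_append_right _ _ _ _ (by simp [length_interleave]; omega)]
  simp [length_interleave, show 4 * n - (4 * n - 1 + 1) = 0 by omega]

lemma framed_getD_of_pos_of_lt (h0 : 0 < p) (hp : p < 4 * n) :
    (framed top A B C bot n).getD p 0 = (interleave A B C n).getD (p - 1) 0 := by
  obtain ⟨k, rfl⟩ : ∃ k, p = k + 1 := ⟨p - 1, by omega⟩
  rw [framed, List.getD_append _ _ _ _ (by simp [length_interleave]; omega),
    List.getD_cons_succ, Nat.add_sub_cancel]

lemma framed_getD_of_mod_four_eq_one (h1 : p % 4 = 1) (hp : p < 4 * n) :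
    (framed top A B C bot n).getD p 0 = A.getD (p / 4) 0 := by
  rw [framed_getD_of_pos_of_lt (by omega) hp, interleave_getD (by omega), if_pos (by omega)]
  congr 1
  omega

lemma framed_getD_of_mod_four_eq_three (h3 : p % 4 = 3) (hp : p < 4 * n) :
    (framed top A B C bot n).getD p 0 = C.getD (p / 4) 0 := by
  rw [framed_getD_of_pos_of_lt (by omega) hp, interleave_getD (by omega), if_neg (by omega),
    if_pos (by omega)]
  congr 1
  omega

lemma framed_getD_of_even (h2 : p % 2 = 0) (h0 : 0 < p) (hp : p < 4 * n) :
    (framed top A B C bot n).getD p 0 = B.getD (p / 2 - 1) 0 := by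
  rw [framed_getD_of_pos_of_lt h0 hp, interleave_getD (by omega), if_neg (by omega),
    if_neg (by omega)]
  congr 1
  omega

end Framed

/-- The value conditions of Construction 1. -/
structure IsFrame (top : ℤ) (A B C : List ℤ) (bot : ℤ) (n : ℕ) : Prop where
  pos : 0 < n
  length_A : n ≤ A.length
  length_B : 2 * n - 1 ≤ B.length
  length_C : n ≤ C.length
  A_lt_B : ∀ a ∈ A, ∀ b ∈ B, a < b
  B_lt_C : ∀ b ∈ B, ∀ c ∈ C, b < c
  bot_lt : ∀ x ∈ A ++ B ++ C, bot < x
  lt_top : ∀ x ∈ A ++ B ++ C, x < top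

namespace IsFrame

variable {top bot : ℤ} {A B C : List ℤ} {n p : ℕ}

lemma getD_mem_A (h : IsFrame top A B C bot n) (h1 : p % 4 = 1) (hp : p < 4 * n) :
    (framed top A B C bot n).getD p 0 ∈ A := by
  rw [framed_getD_of_mod_four_eq_one h1 hp]
  exact getD_mem (by have := h.length_A; omega)

lemma getD_mem_B (h : IsFrame top A B C bot n) (h2 : p % 2 = 0) (h0 : 0 < p) (hp : p < 4 * n) :
    (framed top A B C bot n).getD p 0 ∈ B := by
  rw [framed_getD_of_even h2 h0 hp]
  exact getD_mem (by have := h.length_B; omega)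

lemma getD_mem_C (h : IsFrame top A B C bot n) (h3 : p % 4 = 3) (hp : p < 4 * n) :
    (framed top A B C bot n).getD p 0 ∈ C := by
  rw [framed_getD_of_mod_four_eq_three h3 hp]
  exact getD_mem (by have := h.length_C; omega)

lemma getD_lt_getD_succ (h : IsFrame top A B C bot n) (hp4 : p % 4 = 1 ∨ p % 4 = 2)
    (hp : p < 4 * n) :
    (framed top A B C bot n).getD p 0 < (framed top A B C bot n).getD (p + 1) 0 := by
  rcases hp4 with hp4 | hp4
  · exact h.A_lt_B _ (h.getD_mem_A hp4 hp) _ (h.getD_mem_B (by omega) (by omega) (by omega))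
  · exact h.B_lt_C _ (h.getD_mem_B (by omega) (by omega) hp) _ (h.getD_mem_C (by omega) (by omega))

lemma getD_succ_lt_getD (h : IsFrame top A B C bot n) (hp4 : p % 4 = 0 ∨ p % 4 = 3)
    (hp : p < 4 * n) :
    (framed top A B C bot n).getD (p + 1) 0 < (framed top A B C bot n).getD p 0 := by
  rcases hp4 with hp4 | hp4
  · rcases Nat.eq_zero_or_pos p with rfl | hp0
    · exact h.lt_top _ (List.mem_append_left _ (List.mem_append_left _
        (h.getD_mem_A (by omega) (by omega))))
    · exact h.A_lt_B _ (h.getD_mem_A (by omega) (by omega)) _ (h.getD_mem_B (by omega) hp0 hp)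
  · rcases (by omega : p + 1 < 4 * n ∨ p + 1 = 4 * n) with hp1 | hp1
    · exact h.B_lt_C _ (h.getD_mem_B (by omega) (by omega) hp1) _ (h.getD_mem_C hp4 hp)
    · rw [hp1, framed_getD_four_mul h.pos]
      exact h.bot_lt _ (List.mem_append_right _ (h.getD_mem_C hp4 hp))

lemma getD_lt_getD_succ_iff (h : IsFrame top A B C bot n) (hp : p < 4 * n) :
    (framed top A B C bot n).getD p 0 < (framed top A B C bot n).getD (p + 1) 0 ↔
      p % 4 = 1 ∨ p % 4 = 2 :=
  ⟨fun hlt => by_contra fun hp4 => (h.getD_succ_lt_getD (by omega) hp).not_gt hlt,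
    fun hp4 => h.getD_lt_getD_succ hp4 hp⟩

lemma getD_succ_lt_getD_iff (h : IsFrame top A B C bot n) (hp : p < 4 * n) :
    (framed top A B C bot n).getD (p + 1) 0 < (framed top A B C bot n).getD p 0 ↔
      p % 4 = 0 ∨ p % 4 = 3 :=
  ⟨fun hlt => by_contra fun hp4 => (h.getD_lt_getD_succ (by omega) hp).not_gt hlt,
    fun hp4 => h.getD_succ_lt_getD hp4 hp⟩

lemma bot_lt_top (h : IsFrame top A B C bot n) : bot < top := by
  have hA : A.getD 0 0 ∈ A ++ B ++ C := List.mem_append_left _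
    (List.mem_append_left _ (getD_mem (by have := h.length_A; have := h.pos; omega)))
  exact (h.bot_lt _ hA).trans (h.lt_top _ hA)

lemma mem_of_mem_interleave (h : IsFrame top A B C bot n) {x : ℤ}
    (hx : x ∈ interleave A B C n) : x ∈ A ++ B ++ C :=
  mem_interleave h.length_A h.length_B h.length_C hx

lemma le_and_le_of_mem (h : IsFrame top A B C bot n) {x : ℤ} (hx : x ∈ framed top A B C bot n) :
    bot ≤ x ∧ x ≤ top := by
  simp only [framed, List.cons_append, List.mem_cons, List.mem_append, List.not_mem_nil,
    or_false] at hx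
  rcases hx with rfl | hx | rfl
  · exact ⟨h.bot_lt_top.le, le_rfl⟩
  · have hx := h.mem_of_mem_interleave hx
    exact ⟨(h.bot_lt _ hx).le, (h.lt_top _ hx).le⟩
  · exact ⟨le_rfl, h.bot_lt_top.le⟩

lemma nodup (h : IsFrame top A B C bot n) (hA : A.Nodup) (hB : B.Nodup) (hC : C.Nodup) :
    (framed top A B C bot n).Nodup := by
  have hb : B.getD 0 0 ∈ B := getD_mem (by have := h.length_B; have := h.pos; omega)
  have hI := interleave_nodup hA hB hC h.length_A h.length_B h.length_C
    (fun a ha hb' => (h.A_lt_B a ha a hb').false)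
    (fun b hb' hc => (h.B_lt_C b hb' b hc).false)
    (fun a ha hc => ((h.A_lt_B a ha _ hb).trans (h.B_lt_C _ hb a hc)).false)
  rw [framed, List.cons_append, List.nodup_cons, List.nodup_append]
  refine ⟨?_, hI, List.nodup_singleton _, ?_⟩
  · simp only [List.mem_append, List.mem_singleton, not_or]
    exact ⟨fun hx => (h.lt_top _ (h.mem_of_mem_interleave hx)).false, h.bot_lt_top.ne'⟩
  · intro x hx b hb hxb
    exact (h.bot_lt x (h.mem_of_mem_interleave hx)).ne (hxb.trans (List.mem_singleton.mp hb)).symm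

/-- The even positions of `framed` carry `B`. -/
lemma isSquareAt_B (h : IsFrame top A B C bot n) {s L : ℕ}
    (hsq : IsSquareAt (framed top A B C bot n) s L) (h4 : 4 ∣ L) (hs : 0 < s)
    (hsL : s + L + L ≤ 4 * n) : IsSquareAt B ((s + 1) / 2 - 1) (L / 2) := by
  obtain ⟨hL, -, hiso⟩ := hsq
  have hB := h.length_B
  have hpos : ∀ w < L, B.getD ((s + 1) / 2 - 1 + w) 0 =
      (framed top A B C bot n).getD (s + (s % 2 + 2 * w)) 0 := by
    intro w hw
    rw [framed_getD_of_even (by omega) (by omega) (by omega)]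
    congr 1
    omega
  refine ⟨by omega, by omega, fun o ho o' ho' => ?_⟩
  rw [hpos o (by omega), hpos o' (by omega), add_assoc, add_assoc, hpos (L / 2 + o) (by omega),
    hpos (L / 2 + o') (by omega), show s % 2 + 2 * (L / 2 + o) = L + (s % 2 + 2 * o) by omega,
    show s % 2 + 2 * (L / 2 + o') = L + (s % 2 + 2 * o') by omega]
  simpa only [add_assoc] using hiso (s % 2 + 2 * o) (by omega) (s % 2 + 2 * o') (by omega)

lemma squareFreeL (h : IsFrame top A B C bot n) (hB : SquareFreeL B) :
    SquareFreeL (framed top A B C bot n) := by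
  rw [SquareFreeL, containsSquare_iff]
  rintro ⟨s, L, hsq⟩
  have hlen := length_framed h.pos (top := top) (A := A) (B := B) (C := C) (bot := bot)
  have h4 : 4 ∣ L := hsq.four_dvd 0 fun k hk => by
    rw [add_zero]
    exact h.getD_lt_getD_succ_iff (by omega)
  obtain ⟨hL, hsL, hiso⟩ := hsq
  rw [hlen] at hsL
  have mem {x : ℤ} : x ∈ A ∨ x ∈ B ∨ x ∈ C → x ∈ A ++ B ++ C := by simp
  rcases Nat.eq_zero_or_pos s with rfl | hs
  · -- `top` lies above `C` in the first half, but `B` lies below `C` in the second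
    have hcmp := hiso 3 (by omega) 0 (by omega)
    simp only [zero_add, add_zero, framed_getD_zero] at hcmp
    have hC := h.getD_mem_C (top := top) (bot := bot) (p := 3) (by omega) (by omega)
    exact (h.B_lt_C _ (h.getD_mem_B (by omega) (by omega) (by omega)) _
      (h.getD_mem_C (by omega) (by omega))).not_gt (hcmp.mp (h.lt_top _ (mem (Or.inr (Or.inr hC)))))
  rcases (by omega : s + L + L = 4 * n + 1 ∨ s + L + L ≤ 4 * n) with hend | hin
  · -- `A` lies below `B` in the first half, but above `bot` in the second
    have hcmp := hiso (L - 4) (by omega) (L - 1) (by omega)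
    rw [show s + L + (L - 1) = 4 * n by omega, framed_getD_four_mul h.pos] at hcmp
    have hA := h.getD_mem_A (top := top) (bot := bot) (p := s + L + (L - 4)) (by omega) (by omega)
    exact (h.bot_lt _ (mem (Or.inl hA))).not_gt (hcmp.mp (h.A_lt_B _
      (h.getD_mem_A (by omega) (by omega)) _ (h.getD_mem_B (by omega) (by omega) (by omega))))
  · exact hB (containsSquare_iff.mpr ⟨_, _, h.isSquareAt_B ⟨hL, by omega, hiso⟩ h4 hs hin⟩)

end IsFrame

lemma framed_map_neg {top bot : ℤ} {A B C : List ℤ} {n : ℕ} :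
    (framed top A B C bot n).map Neg.neg =
      framed (-top) (A.map Neg.neg) (B.map Neg.neg) (C.map Neg.neg) (-bot) n := by
  simp [framed, interleave_map _ neg_zero]

/-- `(List.range n).map (fun j => (e j : ℤ))` elaborates by lifting `List.range n` to `List ℤ`
in the list monad. -/
lemma range_bind_pure_natCast (n : ℕ) :
    (do let a ← List.range n; pure (a : ℤ) : List ℤ) = (List.range n).map (↑) :=
  List.flatMap_pure_eq_map _ _

lemma mem_map_range_natCast {n : ℕ} {f : ℤ → ℤ} {x : ℤ} :
    x ∈ (do let a ← List.range n; pure (a : ℤ) : List ℤ).map f ↔ ∃ j < n, f j = x := by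
  simp

lemma nodup_map_range_natCast {n : ℕ} {f : ℤ → ℤ} (hf : Function.Injective f) :
    ((do let a ← List.range n; pure (a : ℤ) : List ℤ).map f).Nodup := by
  rw [range_bind_pure_natCast, List.map_map]
  exact List.nodup_range.map (hf.comp Nat.cast_injective)

def Xm (m : ℕ) : List ℤ := (List.range m).map (fun j => (3*m + 3 - j : ℤ))

def Zm (m : ℕ) : List ℤ := (List.range m).map (fun j => (6*m + 2 - j : ℤ))

def Sm (m : ℕ) : List ℤ := (List.range (2*m + 1)).map (fun j => (6*m + 4 + j : ℤ))

def Tm (m : ℕ) : List ℤ := (List.range (2*m + 1)).map (fun j => (2 + j : ℤ))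

lemma Em_eq_framed (m : ℕ) (Y : List ℤ) :
    Em m Y = framed 1 (Sm m) (Hm m Y) (Tm m) (8*m + 5) (2*m + 1) := rfl

section Blocks

variable {m : ℕ} {x : ℤ}

lemma length_Xm : (Xm m).length = m := by simp [Xm]
lemma length_Zm : (Zm m).length = m := by simp [Zm]
lemma length_Sm : (Sm m).length = 2*m + 1 := by simp [Sm]
lemma length_Tm : (Tm m).length = 2*m + 1 := by simp [Tm]

lemma mem_Xm (hx : x ∈ Xm m) : 2*m + 4 ≤ x ∧ x ≤ 3*m + 3 := by
  obtain ⟨j, hj, rfl⟩ := mem_map_range_natCast.mp hx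
  omega

lemma mem_Zm (hx : x ∈ Zm m) : 5*m + 3 ≤ x ∧ x ≤ 6*m + 2 := by
  obtain ⟨j, hj, rfl⟩ := mem_map_range_natCast.mp hx
  omega

lemma mem_Sm (hx : x ∈ Sm m) : 6*m + 4 ≤ x ∧ x ≤ 8*m + 4 := by
  obtain ⟨j, hj, rfl⟩ := mem_map_range_natCast.mp hx
  omega

lemma mem_Tm (hx : x ∈ Tm m) : 2 ≤ x ∧ x ≤ 2*m + 2 := by
  obtain ⟨j, hj, rfl⟩ := mem_map_range_natCast.mp hx
  omega

lemma nodup_Xm : (Xm m).Nodup := nodup_map_range_natCast (sub_right_injective)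
lemma nodup_Zm : (Zm m).Nodup := nodup_map_range_natCast (sub_right_injective)
lemma nodup_Sm : (Sm m).Nodup := nodup_map_range_natCast (add_right_injective _)
lemma nodup_Tm : (Tm m).Nodup := nodup_map_range_natCast (add_right_injective _)

lemma Sm_getD {j : ℕ} (hj : j < 2*m + 1) : (Sm m).getD j 0 = 6*m + 4 + j := by
  rw [Sm, range_bind_pure_natCast, List.map_map, List.getD_eq_getElem _ _ (by simpa using hj)]
  simp

end Blocks

section Construction

variable {m : ℕ} {Y : List ℤ}

lemma isFrame_Hm (hm : 0 < m) (hYlen : Y.length = 2*m - 1)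
    (hYset : ∀ y ∈ Y, (3*m + 4 : ℤ) ≤ y ∧ y ≤ (5*m + 2 : ℤ)) :
    IsFrame (6*m + 3) (Xm m) Y (Zm m) (2*m + 3) m := by
  have hXYZ : ∀ x ∈ Xm m ++ Y ++ Zm m, 2*m + 4 ≤ x ∧ x ≤ 6*m + 2 := by
    simp only [List.mem_append]
    rintro x ((hx | hx) | hx)
    exacts [by have := mem_Xm hx; omega, by have := hYset x hx; omega,
      by have := mem_Zm hx; omega]
  exact
    { pos := hm
      length_A := length_Xm.ge
      length_B := hYlen.ge
      length_C := length_Zm.ge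
      A_lt_B := fun a ha b hb => by have := mem_Xm ha; have := hYset b hb; omega
      B_lt_C := fun b hb c hc => by have := hYset b hb; have := mem_Zm hc; omega
      bot_lt := fun x hx => by have := hXYZ x hx; omega
      lt_top := fun x hx => by have := hXYZ x hx; omega }

lemma length_Hm (hH : IsFrame (6*m + 3) (Xm m) Y (Zm m) (2*m + 3) m) :
    (Hm m Y).length = 4*m + 1 :=
  length_framed hH.pos

lemma mem_Hm (hH : IsFrame (6*m + 3) (Xm m) Y (Zm m) (2*m + 3) m) {x : ℤ} (hx : x ∈ Hm m Y) :
    2*m + 3 ≤ x ∧ x ≤ 6*m + 3 :=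
  hH.le_and_le_of_mem hx

/-- Construction 2 is Construction 1 for the reversed order. -/
lemma Em_map_neg :
    (Em m Y).map Neg.neg = framed (-1) ((Sm m).map Neg.neg) ((Hm m Y).map Neg.neg)
      ((Tm m).map Neg.neg) (-(8*m + 5)) (2*m + 1) := by
  rw [Em_eq_framed, framed_map_neg]

lemma isFrame_Em_map_neg (hH : IsFrame (6*m + 3) (Xm m) Y (Zm m) (2*m + 3) m) :
    IsFrame (-1) ((Sm m).map Neg.neg) ((Hm m Y).map Neg.neg) ((Tm m).map Neg.neg)
      (-(8*m + 5)) (2*m + 1) := by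
  have hSHT : ∀ x ∈ Sm m ++ Hm m Y ++ Tm m, 2 ≤ x ∧ x ≤ 8*m + 4 := by
    simp only [List.mem_append]
    rintro x ((hx | hx) | hx)
    exacts [by have := mem_Sm hx; omega, by have := mem_Hm hH hx; omega,
      by have := mem_Tm hx; omega]
  refine
    { pos := by omega
      length_A := by simp [length_Sm]
      length_B := by simp [length_Hm hH]; omega
      length_C := by simp [length_Tm]
      A_lt_B := ?_
      B_lt_C := ?_
      bot_lt := ?_
      lt_top := ?_ } <;>
  simp only [← List.map_append, List.forall_mem_map, neg_lt_neg_iff]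
  · intro a ha b hb
    have := mem_Sm ha; have := mem_Hm hH hb; omega
  · intro b hb c hc
    have := mem_Hm hH hb; have := mem_Tm hc; omega
  · intro x hx
    have := hSHT x hx; omega
  · intro x hx
    have := hSHT x hx; omega

lemma Em_getD_eq_neg (p : ℕ) :
    (Em m Y).getD p 0 = -(framed (-1) ((Sm m).map Neg.neg) ((Hm m Y).map Neg.neg)
      ((Tm m).map Neg.neg) (-(8*m + 5)) (2*m + 1)).getD p 0 := by
  rw [← Em_map_neg, getD_map_neg, neg_neg]

lemma length_Em : (Em m Y).length = 8*m + 5 := by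
  rw [Em_eq_framed, length_framed (by omega)]
  ring

lemma Em_getD_succ_lt_getD_iff (hH : IsFrame (6*m + 3) (Xm m) Y (Zm m) (2*m + 3) m) {p : ℕ}
    (hp : p < 8*m + 4) :
    (Em m Y).getD (p + 1) 0 < (Em m Y).getD p 0 ↔ p % 4 = 1 ∨ p % 4 = 2 := by
  rw [Em_getD_eq_neg, Em_getD_eq_neg, neg_lt_neg_iff]
  exact (isFrame_Em_map_neg hH).getD_lt_getD_succ_iff (by omega)

lemma Em_getD_lt_getD_succ_iff (hH : IsFrame (6*m + 3) (Xm m) Y (Zm m) (2*m + 3) m) {p : ℕ}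
    (hp : p < 8*m + 4) :
    (Em m Y).getD p 0 < (Em m Y).getD (p + 1) 0 ↔ p % 4 = 0 ∨ p % 4 = 3 := by
  rw [Em_getD_eq_neg, Em_getD_eq_neg, neg_lt_neg_iff]
  exact (isFrame_Em_map_neg hH).getD_succ_lt_getD_iff (by omega)

lemma squareFreeL_Em (hH : IsFrame (6*m + 3) (Xm m) Y (Zm m) (2*m + 3) m)
    (hYsf : SquareFreeL Y) : SquareFreeL (Em m Y) := by
  have hHsf : SquareFreeL ((Hm m Y).map Neg.neg) := by
    rw [SquareFreeL, containsSquare_map_neg_iff]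
    exact hH.squareFreeL hYsf
  rw [SquareFreeL, ← containsSquare_map_neg_iff, Em_map_neg]
  exact (isFrame_Em_map_neg hH).squareFreeL hHsf

lemma nodup_Em (hH : IsFrame (6*m + 3) (Xm m) Y (Zm m) (2*m + 3) m) (hYnd : Y.Nodup) :
    (Em m Y).Nodup := by
  have hnd := (isFrame_Em_map_neg hH).nodup (nodup_Sm.map neg_injective)
    ((hH.nodup nodup_Xm hYnd nodup_Zm).map neg_injective) (nodup_Tm.map neg_injective)
  rwa [← Em_map_neg, List.nodup_map_iff neg_injective] at hnd

lemma mem_Em (hH : IsFrame (6*m + 3) (Xm m) Y (Zm m) (2*m + 3) m) {x : ℤ} (hx : x ∈ Em m Y) :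
    1 ≤ x ∧ x ≤ 8*m + 5 := by
  have := (isFrame_Em_map_neg hH).le_and_le_of_mem
    (Em_map_neg (m := m) (Y := Y) ▸ List.mem_map_of_mem (f := Neg.neg) hx)
  omega

end Construction

section Witness

variable {m : ℕ} {Y : List ℤ}

lemma extL_insertIdx_two (hH : IsFrame (6*m + 3) (Xm m) Y (Zm m) (2*m + 3) m)
    (hYnd : Y.Nodup) :
    ExtL ((Em m Y).insertIdx 2 (8*m + 6)) (Em m Y) 2 := by
  have hlen : 2 ≤ (Em m Y).length := by rw [length_Em]; omega
  refine ⟨?_, List.length_insertIdx_of_le_length hlen _, hlen, ?_⟩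
  · rw [(List.perm_insertIdx _ _ hlen).nodup_iff, List.nodup_cons]
    exact ⟨fun hx => by have := mem_Em hH hx; omega, nodup_Em hH hYnd⟩
  · rw [List.eraseIdx_insertIdx_self]
    exact ⟨rfl, fun _ _ _ _ => Iff.rfl⟩

lemma insertIdx_two_getD_lt_getD_succ_iff (hH : IsFrame (6*m + 3) (Xm m) Y (Zm m) (2*m + 3) m)
    {k : ℕ} (hk : k + 1 < 8*m + 6) :
    ((Em m Y).insertIdx 2 (8*m + 6)).getD k 0 < ((Em m Y).insertIdx 2 (8*m + 6)).getD (k + 1) 0 ↔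
      (k + 1) % 4 = 1 ∨ (k + 1) % 4 = 2 := by
  have hE := length_Em (m := m) (Y := Y)
  have hlen : 2 ≤ (Em m Y).length := by omega
  rcases (by omega : k = 0 ∨ k = 1 ∨ k = 2 ∨ 3 ≤ k) with rfl | rfl | rfl | hk3
  · rw [getD_insertIdx_of_lt _ (by omega), getD_insertIdx_of_lt _ (by omega),
      Em_getD_lt_getD_succ_iff hH (by omega)]
    omega
  · rw [getD_insertIdx_of_lt _ (by omega), show 1 + 1 = 2 from rfl, getD_insertIdx_self _ hlen]
    have := mem_Em hH (getD_mem (d := 0) (show 1 < (Em m Y).length by omega))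
    omega
  · rw [getD_insertIdx_self _ hlen, getD_insertIdx_of_gt _ (by omega), show 2 + 1 - 1 = 2 from rfl]
    have := mem_Em hH (getD_mem (d := 0) (show 2 < (Em m Y).length by omega))
    omega
  · rw [getD_insertIdx_of_gt _ (by omega), getD_insertIdx_of_gt _ (by omega),
      show k + 1 - 1 = (k - 1) + 1 by omega, Em_getD_lt_getD_succ_iff hH (by omega)]
    omega

lemma not_isSquareAt_insertIdx_two_four (hH : IsFrame (6*m + 3) (Xm m) Y (Zm m) (2*m + 3) m)
    {s : ℕ} (hs : s ≤ 2) : ¬ IsSquareAt ((Em m Y).insertIdx 2 (8*m + 6)) s 4 := by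
  rintro ⟨-, hsL, hiso⟩
  have hE := length_Em (m := m) (Y := Y)
  rw [List.length_insertIdx_of_le_length (by omega), hE] at hsL
  have hQ3 {k : ℕ} (hk : 3 ≤ k) :=
    getD_insertIdx_of_gt (l := Em m Y) (d := 0) (8*m + 6 : ℤ) (by omega : 2 < k)
  have hEH {q : ℕ} (hq : q < 4) : (Em m Y).getD (2 * q + 2) 0 = (Hm m Y).getD q 0 := by
    rw [Em_eq_framed, framed_getD_of_even (by omega) (by omega) (by omega)]
    congr 1
    omega
  have hE24 : (Em m Y).getD 4 0 < (Em m Y).getD 2 0 := by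
    rw [hEH (q := 0) (by omega), hEH (q := 1) (by omega)]
    exact hH.getD_succ_lt_getD (by omega) (by omega)
  have hE46 : (Em m Y).getD 4 0 < (Em m Y).getD 6 0 := by
    rw [hEH (q := 1) (by omega), hEH (q := 2) (by omega)]
    exact hH.getD_lt_getD_succ (by omega) (by omega)
  have hE68 : (Em m Y).getD 6 0 < (Em m Y).getD 8 0 := by
    rw [hEH (q := 2) (by omega), hEH (q := 3) (by omega)]
    exact hH.getD_lt_getD_succ (by omega) (by omega)
  have hE12 := (Em_getD_succ_lt_getD_iff hH (p := 1) (by omega)).mpr (by omega)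
  rcases (by omega : s ≤ 1 ∨ s = 2) with hs1 | rfl
  · have hcmp := hiso (1 - s) (by omega) (3 - s) (by omega)
    rw [show s + (1 - s) = 1 by omega, show s + (3 - s) = 3 by omega,
      show s + 4 + (1 - s) = 5 by omega, show s + 4 + (3 - s) = 7 by omega,
      getD_insertIdx_of_lt _ (by omega), hQ3 (by omega), hQ3 (by omega), hQ3 (by omega)] at hcmp
    exact hE12.not_gt (hcmp.mpr hE46)
  · have hcmp := hiso 1 (by omega) 3 (by omega)
    rw [hQ3 (by omega), hQ3 (by omega), hQ3 (by omega), hQ3 (by omega)] at hcmp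
    exact hE24.not_gt (hcmp.mpr hE68)

/-- In the first half the inserted maximum lies above the entry four places later; in the second
half these places carry consecutive entries of the increasing `Sm`. -/
lemma not_isSquareAt_insertIdx_two_of_eight_le (hm : 2 ≤ m)
    (hH : IsFrame (6*m + 3) (Xm m) Y (Zm m) (2*m + 3) m) {s L : ℕ} (hs : s ≤ 2) (h4 : 4 ∣ L)
    (hL : 8 ≤ L) : ¬ IsSquareAt ((Em m Y).insertIdx 2 (8*m + 6)) s L := by
  rintro ⟨-, hsL, hiso⟩
  have hE := length_Em (m := m) (Y := Y)
  rw [List.length_insertIdx_of_le_length (by omega), hE] at hsL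
  have hQ3 {k : ℕ} (hk : 3 ≤ k) :=
    getD_insertIdx_of_gt (l := Em m Y) (d := 0) (8*m + 6 : ℤ) (by omega : 2 < k)
  have hcmp := hiso (2 - s) (by omega) (6 - s) (by omega)
  rw [show s + (2 - s) = 2 by omega, show s + (6 - s) = 6 by omega,
    show s + L + (2 - s) = L + 2 by omega, show s + L + (6 - s) = L + 6 by omega,
    getD_insertIdx_self _ (by omega), hQ3 (by omega), hQ3 (by omega), hQ3 (by omega)] at hcmp
  have hS {p : ℕ} (h1 : p % 4 = 1) (hp : p < 8*m + 4) :
      (Em m Y).getD p 0 = 6*m + 4 + (p / 4 : ℕ) := by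
    rw [Em_eq_framed, framed_getD_of_mod_four_eq_one h1 (by omega), Sm_getD (by omega)]
  have hE5 : (Em m Y).getD (6 - 1) 0 ≤ 8*m + 5 := (mem_Em hH (getD_mem (by omega))).2
  rw [hS (p := L + 2 - 1) (by omega) (by omega), hS (p := L + 6 - 1) (by omega) (by omega)]
    at hcmp
  have : (L + 2 - 1) / 4 < (L + 6 - 1) / 4 := by omega
  omega

lemma squareFreeL_insertIdx_two (hm : 2 ≤ m)
    (hH : IsFrame (6*m + 3) (Xm m) Y (Zm m) (2*m + 3) m) (hYsf : SquareFreeL Y) :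
    SquareFreeL ((Em m Y).insertIdx 2 (8*m + 6)) := by
  rw [SquareFreeL, containsSquare_iff]
  rintro ⟨s, L, hsq⟩
  have hE := length_Em (m := m) (Y := Y)
  rcases (by omega : 3 ≤ s ∨ s ≤ 2) with hs | hs
  · refine squareFreeL_Em hH hYsf (containsSquare_iff.mpr ⟨s - 1, L, hsq.of_getD_eq ?_ ?_⟩)
    · have := hsq.2.1
      rw [List.length_insertIdx_of_le_length (by omega)] at this
      omega
    · intro o ho
      rw [getD_insertIdx_of_gt _ (by omega)]
      congr 1
      omega
  have h4 : 4 ∣ L := hsq.four_dvd 1 fun k hk => insertIdx_two_getD_lt_getD_succ_iff hH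
    (by rwa [List.length_insertIdx_of_le_length (by omega), hE] at hk)
  rcases (by have := hsq.1; omega : L = 4 ∨ 8 ≤ L) with rfl | hL8
  · exact not_isSquareAt_insertIdx_two_four hH hs hsq
  · exact not_isSquareAt_insertIdx_two_of_eight_le hm hH hs h4 hL8 hsq

end Witness

theorem stmt15_general (m : ℕ) (hm : 2 ≤ m) (Y : List ℤ)
    (hYlen : Y.length = 2*m - 1) (hYnd : Y.Nodup)
    (hYset : ∀ y ∈ Y, (3*m + 4 : ℤ) ≤ y ∧ y ≤ (5*m + 2 : ℤ))
    (hYsf : SquareFreeL Y) :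
    (∀ i : ℕ, 3 ≤ i → i ≤ 8*m + 2 → ∀ Q : List ℤ, ExtL Q (Em m Y) i →
      ∃ f : List ℤ, f <:+: Q ∧ f.length = 4 ∧ IsSquareL f) ∧
    ¬ (SquareFreeL (Em m Y) ∧
        ∀ i ≤ 8*m + 5, ∀ Q : List ℤ, ExtL Q (Em m Y) i → ContainsSquare Q) := by
  have hH := isFrame_Hm (by omega) hYlen hYset
  refine ⟨fun i hi3 hi8 Q hext => ?_, fun ⟨_, hcrucial⟩ => ?_⟩
  · refine exists_square_four_of_extL (fun k hk => ?_) hext hi3 (by rw [length_Em]; omega)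
    rw [length_Em] at hk
    exact Em_getD_succ_lt_getD_iff hH (by omega)
  · exact squareFreeL_insertIdx_two hm hH hYsf
      (hcrucial 2 (by omega) _ (extL_insertIdx_two hH hYnd))

theorem stmt15 (m : ℕ) (hm : 2 ≤ m) (Y : List ℤ)
    (hYlen : Y.length = 2*m - 1) (hYnd : Y.Nodup)
    (hYset : ∀ y ∈ Y, (3*m + 4 : ℤ) ≤ y ∧ y ≤ (5*m + 2 : ℤ))
    (hYsf : SquareFreeL Y)
    (hy2 : Y.getD 1 0 > Y.getD 2 0)
    (hy3 : Y.getD (2*m - 4) 0 > Y.getD (2*m - 3) 0) :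
    (∀ i : ℕ, 3 ≤ i → i ≤ 8*m + 2 → ∀ Q : List ℤ, ExtL Q (Em m Y) i →
      ∃ f : List ℤ, f <:+: Q ∧ f.length = 4 ∧ IsSquareL f) ∧
    ¬ (SquareFreeL (Em m Y) ∧
        ∀ i ≤ 8*m + 5, ∀ Q : List ℤ, ExtL Q (Em m Y) i → ContainsSquare Q) :=
  stmt15_general m hm Y hYlen hYnd hYset hYsf
end
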